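/- Let 𝒢 be an e-graph and G its converted circuit. The map φ ↦ α_φ is a bijection from the set of minimal satisfying extractions of 𝒢 to the set of minimal satisfying evaluations of G, with inverse α ↦ φ_α: for every minimal satisfying extraction φ one has φ_{α_φ} = φ, and for every minimal satisfying evaluation α one has α_{φ_α} = α. -/
import Mathlib


/-- Gate types for a monotone circuit. -/
inductive Gate where
  | AND : Gate
  | OR : Gate
deriving DecidableEq

/-- A weighted cyclic monotone circuit: a directed graph with a set of outputs,
a gate-type function, and a cost function (costs are only meaningful on inputs). -/
structure Circuit (V : Type) where
  edge : V → V → Prop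
  isOut : V → Prop
  gate : V → Gate
  cost : V → ℝ

namespace Circuit

variable {V : Type}

/-- The inputs are the vertices of in-degree 0. -/
def IsInput (G : Circuit V) (u : V) : Prop := ∀ v, ¬ G.edge v u

/-- A valid evaluation: each non-input gate evaluates to its gate function applied to
the values of its in-neighbors. -/
def Valid (G : Circuit V) (α : V → Bool) : Prop :=
  ∀ u : V, ¬ G.IsInput u →
    (α u = true ↔
      match G.gate u with
      | Gate.AND => ∀ v, G.edge v u → α v = true
      | Gate.OR => ∃ v, G.edge v u ∧ α v = true)

/-- An evaluation satisfies the circuit if it is 1 on all outputs. -/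
def Satisfies (G : Circuit V) (α : V → Bool) : Prop :=
  ∀ u, G.isOut u → α u = true

/-- The restriction `α|_A`: equal to `α` on `A` and `0` (false) elsewhere. -/
noncomputable def restrict (α : V → Bool) (A : Set V) : V → Bool :=
  fun u => @ite _ (u ∈ A) (Classical.propDecidable _) (α u) false

/-- A minimal satisfying evaluation: valid, satisfying, and no restriction of its
true set to a proper subset is a valid satisfying evaluation. -/
def MinSat (G : Circuit V) (α : V → Bool) : Prop :=
  G.Valid α ∧ G.Satisfies α ∧
    ∀ A : Set V, A ⊂ {u | α u = true} →
      ¬ (G.Valid (restrict α A) ∧ G.Satisfies (restrict α A))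

/-- `α` is acyclic if the subgraph `G[α]` induced by the true vertices has no
directed cycle. -/
def EvalAcyclic (G : Circuit V) (α : V → Bool) : Prop :=
  ∀ u, ¬ Relation.TransGen (fun a b => G.edge a b ∧ α a = true ∧ α b = true) u u

end Circuit

/-- An e-graph: a finite set `N` of e-nodes partitioned into e-classes (indexed by the
type `C`, via the surjective class map `cls`), a dependency relation `edge ⊆ N × C`,
a set of output classes, and a cost function. -/
structure EGraph (N C : Type) where
  cls : N → C
  surj : Function.Surjective cls
  edge : N → C → Prop
  isOut : C → Prop
  cost : N → ℝ

namespace EGraph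

variable {N C : Type}

/-- An extraction, modeled as a partial function `C → Option N`: a choice function
(on its domain) closed under dependencies. -/
def IsExtraction (𝒢 : EGraph N C) (φ : C → Option N) : Prop :=
  (∀ D u, φ D = some u → 𝒢.cls u = D) ∧
  (∀ D u D', φ D = some u → 𝒢.edge u D' → (φ D').isSome)

/-- A satisfying extraction: an extraction whose domain contains all output classes. -/
def SatExtraction (𝒢 : EGraph N C) (φ : C → Option N) : Prop :=
  𝒢.IsExtraction φ ∧ ∀ D, 𝒢.isOut D → (φ D).isSome

/-- The restriction `φ|_𝒜` of an extraction to a set of classes. -/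
noncomputable def restrictExt (φ : C → Option N) (𝒜 : Set C) : C → Option N :=
  fun D => @ite _ (D ∈ 𝒜) (Classical.propDecidable _) (φ D) none

/-- A minimally satisfying extraction: satisfying, and no restriction to a proper
subset of its domain is a satisfying extraction. -/
def MinSatExtraction (𝒢 : EGraph N C) (φ : C → Option N) : Prop :=
  𝒢.SatExtraction φ ∧
    ∀ 𝒜 : Set C, 𝒜 ⊂ {D | (φ D).isSome = true} →
      ¬ 𝒢.SatExtraction (restrictExt φ 𝒜)

/-- An extraction is acyclic if there is no (nontrivial) selected path from a class
to itself. -/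
def ExtAcyclic (𝒢 : EGraph N C) (φ : C → Option N) : Prop :=
  ∀ D, ¬ Relation.TransGen (fun D₁ D₂ => ∃ u, φ D₁ = some u ∧ 𝒢.edge u D₂) D D

/-- Vertices of the converted circuit: an input `x_u` and an AND gate `∧_u` for each
e-node `u`, and an OR gate `∨_D` for each e-class `D`. -/
inductive Vtx (N C : Type) where
  | x : N → Vtx N C
  | and : N → Vtx N C
  | or : C → Vtx N C

/-- The converted circuit of an e-graph: edges `(∧_u, ∨_D)` for `u ∈ D`,
`(∨_D, ∧_u)` for `(u, D) ∈ ℰ`, and `(x_u, ∧_u)`; outputs `∨_D` for output classes `D`;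
gate types AND on `∧_u`, OR on `∨_D`; cost `c(x_u) = c(u)`. -/
def conv (𝒢 : EGraph N C) : Circuit (Vtx N C) where
  edge a b :=
    match a, b with
    | .and u, .or D => 𝒢.cls u = D
    | .or D, .and u => 𝒢.edge u D
    | .x u, .and v => u = v
    | _, _ => False
  isOut a :=
    match a with
    | .or D => 𝒢.isOut D
    | _ => False
  gate a :=
    match a with
    | .or _ => Gate.OR
    | _ => Gate.AND
  cost a :=
    match a with
    | .x u => 𝒢.cost u
    | _ => 0

/-- The evaluation `α_φ` associated to an extraction `φ`:
`α_φ(x_u) = α_φ(∧_u) = 1` iff `φ(cls u) = u`, and `α_φ(∨_D) = 1` iff `D ∈ dom φ`. -/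
noncomputable def evalOf (𝒢 : EGraph N C) (φ : C → Option N) : Vtx N C → Bool :=
  fun a =>
    match a with
    | .x u => @decide (φ (𝒢.cls u) = some u) (Classical.propDecidable _)
    | .and u => @decide (φ (𝒢.cls u) = some u) (Classical.propDecidable _)
    | .or D => (φ D).isSome

/-- The extraction `φ_α` associated to an evaluation `α`:
`D ∈ dom φ_α` and `φ_α(D) = u` iff `u ∈ D` and `α(∧_u) = 1`. -/
noncomputable def extOf (𝒢 : EGraph N C) (α : Vtx N C → Bool) : C → Option N :=
  fun D =>
    @dite _ (∃ u, 𝒢.cls u = D ∧ α (Vtx.and u) = true) (Classical.propDecidable _)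
      (fun h => some h.choose) (fun _ => none)

end EGraph

section Helpers

open EGraph Circuit

variable {N C : Type} (𝒢 : EGraph N C)

lemma restrict_of_mem {V : Type} {α : V → Bool} {A : Set V} {w : V} (h : w ∈ A) :
    Circuit.restrict α A w = α w := if_pos h

lemma restrict_of_not_mem {V : Type} {α : V → Bool} {A : Set V} {w : V} (h : w ∉ A) :
    Circuit.restrict α A w = false := if_neg h

lemma restrict_le {V : Type} {α : V → Bool} {A : Set V} {w : V}
    (h : Circuit.restrict α A w = true) : w ∈ A ∧ α w = true := by
  by_cases hw : w ∈ A
  · exact ⟨hw, (restrict_of_mem hw).symm.trans h⟩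
  · rw [restrict_of_not_mem hw] at h; exact absurd h (by simp)

lemma restrict_eq_self_of {V : Type} {α : V → Bool} {A : Set V} {w : V}
    (hw : α w = true → w ∈ A) : Circuit.restrict α A w = α w := by
  by_cases h : w ∈ A
  · exact restrict_of_mem h
  · rw [restrict_of_not_mem h]
    cases hαw : α w
    · rfl
    · exact absurd (hw hαw) h

lemma restrictExt_of_mem {φ : C → Option N} {𝒜 : Set C} {D : C} (h : D ∈ 𝒜) :
    EGraph.restrictExt φ 𝒜 D = φ D := if_pos h

lemma restrictExt_of_not_mem {φ : C → Option N} {𝒜 : Set C} {D : C} (h : D ∉ 𝒜) :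
    EGraph.restrictExt φ 𝒜 D = none := if_neg h

lemma restrictExt_some {φ : C → Option N} {𝒜 : Set C} {D : C} {u : N}
    (h : EGraph.restrictExt φ 𝒜 D = some u) : D ∈ 𝒜 ∧ φ D = some u := by
  by_cases hD : D ∈ 𝒜
  · exact ⟨hD, (restrictExt_of_mem hD).symm.trans h⟩
  · rw [restrictExt_of_not_mem hD] at h; exact absurd h (by simp)

lemma input_x (u : N) : (𝒢.conv).IsInput (Vtx.x (C := C) u) := by
  intro v h; cases v <;> exact h

lemma not_input_and (u : N) : ¬ (𝒢.conv).IsInput (Vtx.and (C := C) u) :=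
  fun h => h (Vtx.x u) rfl

lemma not_input_or (D : C) : ¬ (𝒢.conv).IsInput (Vtx.or (N := N) D) := by
  obtain ⟨u, hu⟩ := 𝒢.surj D
  exact fun h => h (Vtx.and u) hu

lemma and_pred (α : Vtx N C → Bool) (u : N) :
    (∀ v, (𝒢.conv).edge v (Vtx.and u) → α v = true) ↔
      (α (Vtx.x u) = true ∧ ∀ D, 𝒢.edge u D → α (Vtx.or D) = true) := by
  constructor
  · intro h; exact ⟨h _ rfl, fun D hD => h _ hD⟩
  · rintro ⟨h1, h2⟩ v hv
    cases v with
    | x w => cases hv; exact h1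
    | and w => exact hv.elim
    | or D => exact h2 D hv

lemma or_pred (α : Vtx N C → Bool) (D : C) :
    (∃ v, (𝒢.conv).edge v (Vtx.or D) ∧ α v = true) ↔
      (∃ u, 𝒢.cls u = D ∧ α (Vtx.and u) = true) := by
  constructor
  · rintro ⟨v, hv, hαv⟩
    cases v with
    | x w => exact hv.elim
    | and w => exact ⟨w, hv, hαv⟩
    | or E => exact hv.elim
  · rintro ⟨u, hu, h⟩; exact ⟨Vtx.and u, hu, h⟩

lemma valid_iff (α : Vtx N C → Bool) :
    (𝒢.conv).Valid α ↔
      ((∀ u, α (Vtx.and u) = true ↔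
          (α (Vtx.x u) = true ∧ ∀ D, 𝒢.edge u D → α (Vtx.or D) = true)) ∧
       (∀ D, α (Vtx.or D) = true ↔ ∃ u, 𝒢.cls u = D ∧ α (Vtx.and u) = true)) := by
  constructor
  · intro h
    refine ⟨fun u => ?_, fun D => ?_⟩
    · exact (h (Vtx.and u) (not_input_and 𝒢 u)).trans (and_pred 𝒢 α u)
    · exact (h (Vtx.or D) (not_input_or 𝒢 D)).trans (or_pred 𝒢 α D)
  · rintro ⟨h1, h2⟩ w hw
    cases w with
    | x u => exact (hw (input_x 𝒢 u)).elim
    | and u => exact (h1 u).trans (and_pred 𝒢 α u).symm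
    | or D => exact (h2 D).trans (or_pred 𝒢 α D).symm

lemma sat_iff (α : Vtx N C → Bool) :
    (𝒢.conv).Satisfies α ↔ ∀ D, 𝒢.isOut D → α (Vtx.or D) = true := by
  constructor
  · intro h D hD; exact h (Vtx.or D) hD
  · intro h w hw
    cases w with
    | x u => exact hw.elim
    | and u => exact hw.elim
    | or D => exact h D hw

lemma evalOf_x (φ : C → Option N) (u : N) :
    𝒢.evalOf φ (Vtx.x u) = true ↔ φ (𝒢.cls u) = some u := by
  simp [EGraph.evalOf]

lemma evalOf_and (φ : C → Option N) (u : N) :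
    𝒢.evalOf φ (Vtx.and u) = true ↔ φ (𝒢.cls u) = some u := by
  simp [EGraph.evalOf]

lemma evalOf_or (φ : C → Option N) (D : C) :
    𝒢.evalOf φ (Vtx.or D) = true ↔ (φ D).isSome := by
  simp [EGraph.evalOf]

end Helpers
section Main

open EGraph Circuit

variable {N C : Type} (𝒢 : EGraph N C)

lemma evalOf_valid {φ : C → Option N} (h : 𝒢.IsExtraction φ) :
    (𝒢.conv).Valid (𝒢.evalOf φ) := by
  rw [valid_iff]
  obtain ⟨h1, h2⟩ := h
  refine ⟨fun u => ?_, fun D => ?_⟩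
  · rw [evalOf_and, evalOf_x]
    constructor
    · intro hu
      refine ⟨hu, fun D hD => ?_⟩
      rw [evalOf_or]
      exact h2 _ _ D hu hD
    · exact fun h => h.1
  · rw [evalOf_or]
    constructor
    · intro hD
      obtain ⟨u, hu⟩ := Option.isSome_iff_exists.mp hD
      refine ⟨u, h1 D u hu, ?_⟩
      rw [evalOf_and, h1 D u hu]
      exact hu
    · rintro ⟨u, rfl, hu⟩
      rw [evalOf_and] at hu
      simp [hu]

lemma evalOf_sat {φ : C → Option N} (h : 𝒢.SatExtraction φ) :
    (𝒢.conv).Satisfies (𝒢.evalOf φ) := by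
  rw [sat_iff]
  intro D hD
  rw [evalOf_or]
  exact h.2 D hD

/-- Statement 1 -/
lemma part1 {φ : C → Option N} (h : 𝒢.MinSatExtraction φ) :
    (𝒢.conv).MinSat (𝒢.evalOf φ) := by
  refine ⟨evalOf_valid 𝒢 h.1.1, evalOf_sat 𝒢 h.1, ?_⟩
  rintro A hA ⟨hval, hsat⟩
  set β := Circuit.restrict (𝒢.evalOf φ) A with hβ
  have hβle : ∀ w, β w = true → 𝒢.evalOf φ w = true := fun w hw => (restrict_le hw).2
  have hβA : ∀ w, β w = true → w ∈ A := fun w hw => (restrict_le hw).1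
  rw [valid_iff] at hval
  rw [sat_iff] at hsat
  set 𝒜 : Set C := {D | β (Vtx.or D) = true} with h𝒜
  have h𝒜dom : ∀ D, D ∈ 𝒜 → (φ D).isSome = true := by
    intro D hD
    have := hβle _ hD
    rwa [evalOf_or] at this
  -- the restricted extraction is satisfying
  have hsatext : 𝒢.SatExtraction (EGraph.restrictExt φ 𝒜) := by
    refine ⟨⟨?_, ?_⟩, ?_⟩
    · intro D u hDu
      exact h.1.1.1 D u (restrictExt_some hDu).2
    · intro D u D' hDu hedge
      obtain ⟨hD𝒜, hφD⟩ := restrictExt_some hDu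
      -- β (or D) = true, find the true and-gate in class D
      obtain ⟨v, hv, hβv⟩ := (hval.2 D).mp hD𝒜
      have hφv : φ (𝒢.cls v) = some v := by
        have := hβle _ hβv; rwa [evalOf_and] at this
      rw [hv, hφD] at hφv
      obtain rfl : u = v := by injection hφv
      have hD'𝒜 : D' ∈ 𝒜 := ((hval.1 u).mp hβv).2 D' hedge
      rw [restrictExt_of_mem hD'𝒜]
      exact h𝒜dom D' hD'𝒜
    · intro D hD
      have hD𝒜 : D ∈ 𝒜 := hsat D hD
      rw [restrictExt_of_mem hD𝒜]
      exact h𝒜dom D hD𝒜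
  -- 𝒜 is a proper subset of dom φ
  have hsub : 𝒜 ⊂ {D | (φ D).isSome = true} := by
    refine ⟨h𝒜dom, ?_⟩
    intro hcon
    -- then β = evalOf φ on the true set, contradicting A ⊂ trueset
    have hor : ∀ D, (φ D).isSome = true → β (Vtx.or D) = true := fun D hD => hcon hD
    have hand : ∀ u, φ (𝒢.cls u) = some u → β (Vtx.and u) = true := by
      intro u hu
      have : β (Vtx.or (𝒢.cls u)) = true := hor _ (by simp [hu])
      obtain ⟨v, hv, hβv⟩ := (hval.2 _).mp this
      have hφv : φ (𝒢.cls v) = some v := by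
        have := hβle _ hβv; rwa [evalOf_and] at this
      rw [hv, hu] at hφv
      obtain rfl : u = v := by injection hφv
      exact hβv
    have hx : ∀ u, φ (𝒢.cls u) = some u → β (Vtx.x u) = true := by
      intro u hu
      exact ((hval.1 u).mp (hand u hu)).1
    have : {w | 𝒢.evalOf φ w = true} ⊆ A := by
      intro w hw
      refine hβA w ?_
      cases w with
      | x u => exact hx u ((evalOf_x 𝒢 φ u).mp hw)
      | and u => exact hand u ((evalOf_and 𝒢 φ u).mp hw)
      | or D => exact hor D ((evalOf_or 𝒢 φ D).mp hw)
    exact hA.2 this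
  exact h.2 𝒜 hsub hsatext

lemma vtx_isOut {w : Vtx N C} (h : (𝒢.conv).isOut w) : ∃ D, w = Vtx.or D ∧ 𝒢.isOut D := by
  cases w with
  | x u => exact h.elim
  | and u => exact h.elim
  | or D => exact ⟨D, rfl, h⟩

/-- in a minimal satisfying evaluation, x_u and ∧_u have the same value -/
lemma minsat_x_eq_and {α : Vtx N C → Bool} (h : (𝒢.conv).MinSat α) (u : N) :
    α (Vtx.x u) = α (Vtx.and u) := by
  obtain ⟨hval, hsat, hmin⟩ := h
  rw [valid_iff] at hval
  cases hand : α (Vtx.and u) with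
  | true => exact ((hval.1 u).mp hand).1
  | false =>
    cases hxx : α (Vtx.x u) with
    | false => rfl
    | true =>
      exfalso
      -- remove x_u from the true set
      set A : Set (Vtx N C) := {w | α w = true} \ {Vtx.x u} with hA
      have hmem : ∀ w, w ≠ Vtx.x u → Circuit.restrict α A w = α w := by
        intro w hw
        exact restrict_eq_self_of (fun h => ⟨h, hw⟩)
      have hβx : Circuit.restrict α A (Vtx.x u) = false :=
        restrict_of_not_mem (fun h => h.2 rfl)
      refine hmin A ⟨Set.diff_subset, fun hcon => ?_⟩ ⟨?_, ?_⟩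
      · exact (hcon hxx).2 rfl
      · rw [valid_iff]
        constructor
        · intro v
          rw [hmem (Vtx.and v) (by simp)]
          by_cases hv : v = u
          · subst hv
            rw [hand, hβx]
            simp
          · rw [hmem (Vtx.x v) (by simp [hv])]
            constructor
            · intro hv'
              refine ⟨((hval.1 v).mp hv').1, fun D hD => ?_⟩
              rw [hmem (Vtx.or D) (by simp)]
              exact ((hval.1 v).mp hv').2 D hD
            · intro ⟨h1, h2⟩
              refine (hval.1 v).mpr ⟨h1, fun D hD => ?_⟩
              have := h2 D hD
              rwa [hmem (Vtx.or D) (by simp)] at this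
        · intro D
          rw [hmem (Vtx.or D) (by simp)]
          rw [hval.2 D]
          constructor
          · rintro ⟨v, hv, hv'⟩
            exact ⟨v, hv, by rwa [hmem (Vtx.and v) (by simp)]⟩
          · rintro ⟨v, hv, hv'⟩
            exact ⟨v, hv, by rwa [hmem (Vtx.and v) (by simp)] at hv'⟩
      · intro w hw
        obtain ⟨D, rfl, hD⟩ := vtx_isOut 𝒢 hw
        rw [hmem (Vtx.or D) (by simp)]
        exact hsat _ hw

/-- in a minimal satisfying evaluation, each class has at most one true and-gate -/
lemma minsat_unique {α : Vtx N C → Bool} (h : (𝒢.conv).MinSat α) {u v : N}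
    (hc : 𝒢.cls u = 𝒢.cls v) (hu : α (Vtx.and u) = true) (hv : α (Vtx.and v) = true) :
    u = v := by
  by_contra hne
  obtain ⟨hval, hsat, hmin⟩ := h
  have hvi := hval
  rw [valid_iff] at hvi
  set A : Set (Vtx N C) := {w | α w = true} \ {Vtx.and u, Vtx.x u} with hA
  have hmem : ∀ w, w ≠ Vtx.and u → w ≠ Vtx.x u → Circuit.restrict α A w = α w := by
    intro w hw1 hw2
    exact restrict_eq_self_of (fun h => ⟨h, by simp [hw1, hw2]⟩)
  have hβu : Circuit.restrict α A (Vtx.and u) = false :=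
    restrict_of_not_mem (fun h => h.2 (by simp))
  have hβxu : Circuit.restrict α A (Vtx.x u) = false :=
    restrict_of_not_mem (fun h => h.2 (by simp))
  refine hmin A ⟨Set.diff_subset, fun hcon => ?_⟩ ⟨?_, ?_⟩
  · exact (hcon hu).2 (by simp)
  · rw [valid_iff]
    constructor
    · intro w
      by_cases hw : w = u
      · subst hw
        rw [hβu, hβxu]
        simp
      · rw [hmem (Vtx.and w) (by simp [hw]) (by simp),
            hmem (Vtx.x w) (by simp) (by simp [hw])]
        constructor
        · intro hw'
          refine ⟨((hvi.1 w).mp hw').1, fun D hD => ?_⟩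
          rw [hmem (Vtx.or D) (by simp) (by simp)]
          exact ((hvi.1 w).mp hw').2 D hD
        · intro ⟨h1, h2⟩
          refine (hvi.1 w).mpr ⟨h1, fun D hD => ?_⟩
          have := h2 D hD
          rwa [hmem (Vtx.or D) (by simp) (by simp)] at this
    · intro D
      rw [hmem (Vtx.or D) (by simp) (by simp), hvi.2 D]
      constructor
      · rintro ⟨w, hw, hw'⟩
        by_cases hwu : w = u
        · subst hwu
          refine ⟨v, by rw [← hc, hw], ?_⟩
          rw [hmem (Vtx.and v) (by simp [Ne.symm hne]) (by simp)]
          exact hv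
        · exact ⟨w, hw, by rwa [hmem (Vtx.and w) (by simp [hwu]) (by simp)]⟩
      · rintro ⟨w, hw, hw'⟩
        by_cases hwu : w = u
        · subst hwu; rw [hβu] at hw'; exact absurd hw' (by simp)
        · exact ⟨w, hw, by rwa [hmem (Vtx.and w) (by simp [hwu]) (by simp)] at hw'⟩
  · intro w hw
    obtain ⟨D, rfl, hD⟩ := vtx_isOut 𝒢 hw
    rw [hmem (Vtx.or D) (by simp) (by simp)]
    exact hsat _ hw

end Main
section Final

open EGraph Circuit

variable {N C : Type} (𝒢 : EGraph N C)

lemma extOf_some {α : Vtx N C → Bool} {D : C} {u : N} (h : 𝒢.extOf α D = some u) :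
    𝒢.cls u = D ∧ α (Vtx.and u) = true := by
  by_cases hex : ∃ v, 𝒢.cls v = D ∧ α (Vtx.and v) = true
  · have : 𝒢.extOf α D = some hex.choose := dif_pos hex
    rw [this] at h
    obtain rfl : u = hex.choose := by injection h.symm
    exact hex.choose_spec
  · have : 𝒢.extOf α D = none := dif_neg hex
    rw [this] at h; exact absurd h (by simp)

lemma extOf_isSome {α : Vtx N C → Bool} {D : C} :
    (𝒢.extOf α D).isSome = true ↔ ∃ v, 𝒢.cls v = D ∧ α (Vtx.and v) = true := by
  constructor
  · intro h
    obtain ⟨u, hu⟩ := Option.isSome_iff_exists.mp h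
    exact ⟨u, extOf_some 𝒢 hu⟩
  · intro hex
    have : 𝒢.extOf α D = some hex.choose := dif_pos hex
    rw [this]
    rfl

lemma extOf_eq_some_iff {α : Vtx N C → Bool} (h : (𝒢.conv).MinSat α) {D : C} {u : N} :
    𝒢.extOf α D = some u ↔ (𝒢.cls u = D ∧ α (Vtx.and u) = true) := by
  constructor
  · exact extOf_some 𝒢
  · rintro ⟨rfl, hu⟩
    have hex : ∃ v, 𝒢.cls v = 𝒢.cls u ∧ α (Vtx.and v) = true := ⟨u, rfl, hu⟩
    have heq : 𝒢.extOf α (𝒢.cls u) = some hex.choose := dif_pos hex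
    rw [heq]
    congr 1
    exact minsat_unique 𝒢 h hex.choose_spec.1 hex.choose_spec.2 hu

/-- Statement 2 -/
lemma part2 {α : Vtx N C → Bool} (h : (𝒢.conv).MinSat α) :
    𝒢.MinSatExtraction (𝒢.extOf α) := by
  obtain ⟨hval, hsat, hmin⟩ := h
  have hvi := hval
  rw [valid_iff] at hvi
  have hsatext : 𝒢.SatExtraction (𝒢.extOf α) := by
    refine ⟨⟨fun D u hDu => (extOf_some 𝒢 hDu).1, ?_⟩, ?_⟩
    · intro D u D' hDu hedge
      obtain ⟨hcls, hu⟩ := extOf_some 𝒢 hDu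
      have hD' : α (Vtx.or D') = true := ((hvi.1 u).mp hu).2 D' hedge
      rw [extOf_isSome]
      exact (hvi.2 D').mp hD'
    · intro D hD
      rw [extOf_isSome]
      exact (hvi.2 D).mp (hsat (Vtx.or D) hD)
  refine ⟨hsatext, ?_⟩
  rintro 𝒜 h𝒜 hsat'
  -- build the corresponding evaluation restriction
  set ψ' := EGraph.restrictExt (𝒢.extOf α) 𝒜 with hψ'
  set β := 𝒢.evalOf ψ' with hβ
  have hβval : (𝒢.conv).Valid β := evalOf_valid 𝒢 hsat'.1
  have hβsat : (𝒢.conv).Satisfies β := evalOf_sat 𝒢 hsat'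
  have hβle : ∀ w, β w = true → α w = true := by
    intro w hw
    cases w with
    | x u =>
      rw [hβ, evalOf_x] at hw
      have := (extOf_some 𝒢 (restrictExt_some hw).2).2
      rw [minsat_x_eq_and 𝒢 ⟨hval, hsat, hmin⟩ u]
      exact this
    | and u =>
      rw [hβ, evalOf_and] at hw
      exact (extOf_some 𝒢 (restrictExt_some hw).2).2
    | or D =>
      rw [hβ, evalOf_or] at hw
      by_cases hD : D ∈ 𝒜
      · rw [hψ', restrictExt_of_mem hD] at hw
        obtain ⟨v, hv, hαv⟩ := (extOf_isSome 𝒢).mp hw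
        exact (hvi.2 D).mpr ⟨v, hv, hαv⟩
      · rw [hψ', restrictExt_of_not_mem hD] at hw
        exact absurd hw (by simp)
  set A : Set (Vtx N C) := {w | β w = true} with hAdef
  have hrestr : Circuit.restrict α A = β := by
    funext w
    by_cases hw : w ∈ A
    · rw [restrict_of_mem hw]
      exact (hβle w hw).trans hw.symm
    · rw [restrict_of_not_mem hw]
      simpa [hAdef] using hw
  refine hmin A ⟨fun w hw => hβle w hw, fun hcon => ?_⟩ ⟨?_, ?_⟩
  · -- properness: pick D₀ ∈ dom (extOf α) \ 𝒜
    obtain ⟨D₀, hD₀dom, hD₀𝒜⟩ := Set.exists_of_ssubset h𝒜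
    have hαD₀ : α (Vtx.or D₀) = true := by
      obtain ⟨v, hv, hαv⟩ := (extOf_isSome 𝒢).mp hD₀dom
      exact (hvi.2 D₀).mpr ⟨v, hv, hαv⟩
    have : β (Vtx.or D₀) = true := hcon hαD₀
    rw [hβ, evalOf_or, hψ', restrictExt_of_not_mem hD₀𝒜] at this
    exact absurd this (by simp)
  · rw [hrestr]; exact hβval
  · rw [hrestr]; exact hβsat

/-- Statement 3 -/
lemma part3 {φ : C → Option N} (h : 𝒢.MinSatExtraction φ) :
    𝒢.extOf (𝒢.evalOf φ) = φ := by
  funext D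
  by_cases hex : ∃ u, 𝒢.cls u = D ∧ 𝒢.evalOf φ (Vtx.and u) = true
  · have heq : 𝒢.extOf (𝒢.evalOf φ) D = some hex.choose := dif_pos hex
    obtain ⟨hc, hu⟩ := hex.choose_spec
    rw [evalOf_and, hc] at hu
    rw [heq, hu]
  · have heq : 𝒢.extOf (𝒢.evalOf φ) D = none := dif_neg hex
    rw [heq]
    cases hφ : φ D with
    | none => rfl
    | some u =>
      exfalso
      have hc : 𝒢.cls u = D := h.1.1.1 D u hφ
      exact hex ⟨u, hc, by rw [evalOf_and, hc]; exact hφ⟩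

/-- Statement 4 -/
lemma part4 {α : Vtx N C → Bool} (h : (𝒢.conv).MinSat α) :
    𝒢.evalOf (𝒢.extOf α) = α := by
  have hvi := h.1
  rw [valid_iff] at hvi
  funext w
  cases w with
  | x u =>
    rw [Bool.eq_iff_iff, evalOf_x, extOf_eq_some_iff 𝒢 h,
        minsat_x_eq_and 𝒢 h u]
    simp
  | and u =>
    rw [Bool.eq_iff_iff, evalOf_and, extOf_eq_some_iff 𝒢 h]
    simp
  | or D =>
    rw [Bool.eq_iff_iff, evalOf_or, extOf_isSome, hvi.2 D]

end Final
/-- the map `φ ↦ α_φ` is a bijection from the minimal satisfying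
extractions of the e-graph to the minimal satisfying evaluations of the converted
circuit, with inverse `α ↦ φ_α`. -/
theorem stmt9 {N C : Type} [Fintype N] [Fintype C] (𝒢 : EGraph N C) :
    (∀ φ : C → Option N, 𝒢.MinSatExtraction φ → (𝒢.conv).MinSat (𝒢.evalOf φ)) ∧
    (∀ α : EGraph.Vtx N C → Bool, (𝒢.conv).MinSat α → 𝒢.MinSatExtraction (𝒢.extOf α)) ∧
    (∀ φ : C → Option N, 𝒢.MinSatExtraction φ → 𝒢.extOf (𝒢.evalOf φ) = φ) ∧
    (∀ α : EGraph.Vtx N C → Bool, (𝒢.conv).MinSat α → 𝒢.evalOf (𝒢.extOf α) = α) :=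
  ⟨fun _ h => part1 𝒢 h, fun _ h => part2 𝒢 h, fun _ h => part3 𝒢 h, fun _ h => part4 𝒢 h⟩
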